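/- arXiv:1506.03883 — 2 statements merged into one kernel-verified Lean document; each statement's English description precedes it below -/
import Mathlib

section
/- For every finite game graph G with static hierarchical information and every winning condition W ⊆ V^ω, there exist a finite game graph G' whose positions are V × M for some finite set M (with the same players and action sets, and with enlarged observation alphabets) that yields hierarchical observation, and a winning condition W' ⊆ (V × M)^ω consisting of the sequences whose V-components lie in W, such that G admits a distributed winning strategy for W if and only if G' admits a distributed winning strategy for W', and G admits a finite-state distributed winning strategy for W if and only if G' admits a finite-state distributed winning strategy for W'. -/
/-- A finite game graph for `n` players: positions `V` with initial position `init`,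
action sets `A i`, observation sets `B i`, a move relation labelled by action
profiles (with no dead ends), and observation functions. -/
structure GameGraph (n : ℕ) (V : Type) (A : Fin n → Type) (B : Fin n → Type) where
  init : V
  move : V → (∀ i, A i) → V → Prop
  noDeadEnd : ∀ v a, ∃ w, move v a w
  obs : ∀ i : Fin n, V → B i

/-- A Moore machine with finite state set `Q`, input alphabet `σ`, output alphabet `γ`. -/
structure Moore (σ γ : Type) where
  Q : Type
  finQ : Fintype Q
  q0 : Q
  δ : Q → σ → Q
  out : Q → γ

namespace Moore

/-- The output letter of a Moore machine after reading a word. -/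
def output {σ γ : Type} (mc : Moore σ γ) (w : List σ) : γ :=
  mc.out (w.foldl mc.δ mc.q0)

/-- The output word of a Moore machine along a word: the `k`-th letter is the
output after reading the prefix of length `k+1`. -/
def outWord {σ γ : Type} (mc : Moore σ γ) (w : List σ) : List γ :=
  ((w.scanl mc.δ mc.q0).drop 1).map mc.out

end Moore

/-- A deterministic parity automaton over alphabet `α`. -/
structure ParityAut (α : Type) where
  Q : Type
  finQ : Fintype Q
  q0 : Q
  δ : Q → α → Q
  prio : Q → ℕ

namespace ParityAut

/-- The run of a deterministic parity automaton on an infinite word. -/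
def run {α : Type} (d : ParityAut α) (f : ℕ → α) : ℕ → d.Q
  | 0 => d.q0
  | t + 1 => d.δ (run d f t) (f t)

/-- Parity acceptance: the least priority occurring infinitely often is even. -/
def Accepts {α : Type} (d : ParityAut α) (f : ℕ → α) : Prop :=
  Even (sInf { p | ∃ᶠ t in Filter.atTop, d.prio (d.run f t) = p })

end ParityAut

/-- A deterministic Büchi automaton over alphabet `α` with state set `σ`. -/
structure DetBuchi (α σ : Type) where
  q0 : σ
  δ : σ → α → σ
  accept : Set σ

namespace DetBuchi

/-- The run of a deterministic Büchi automaton on an infinite word. -/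
def run {α σ : Type} (d : DetBuchi α σ) (f : ℕ → α) : ℕ → σ
  | 0 => d.q0
  | t + 1 => d.δ (run d f t) (f t)

/-- Büchi acceptance: the run visits accepting states infinitely often. -/
def Accepts {α σ : Type} (d : DetBuchi α σ) (f : ℕ → α) : Prop :=
  ∃ᶠ t in Filter.atTop, d.run f t ∈ d.accept

end DetBuchi

namespace GameGraph

variable {n : ℕ} {V : Type} {A B : Fin n → Type}

/-- Two positions are linked by a move (for some action profile). -/
def step (G : GameGraph n V A B) (u w : V) : Prop := ∃ a, G.move u a w

/-- A history: a nonempty sequence starting at the initial position, each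
consecutive pair lying on a move. -/
def IsHistory (G : GameGraph n V A B) (π : List V) : Prop :=
  π.head? = some G.init ∧ π.Chain' G.step

/-- The observation sequence of player `i` along a history (the observation at
the initial position is discarded). -/
def obsSeq (G : GameGraph n V A B) (i : Fin n) (π : List V) : List (B i) :=
  (π.drop 1).map (G.obs i)

/-- Histories are indistinguishable for player `i` if they yield the same observations. -/
def Indist (G : GameGraph n V A B) (i : Fin n) (π π' : List V) : Prop :=
  G.obsSeq i π = G.obsSeq i π'

/-- The information set of player `i` at history `π`. -/
def InfoSet (G : GameGraph n V A B) (i : Fin n) (π : List V) : Set (List V) :=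
  { π' | G.IsHistory π' ∧ G.Indist i π π' }

/-- A history yields hierarchical information if the information sets of players
are totally ordered by inclusion. -/
def HistHI (G : GameGraph n V A B) (π : List V) : Prop :=
  ∀ i j : Fin n, G.InfoSet i π ⊆ G.InfoSet j π ∨ G.InfoSet j π ⊆ G.InfoSet i π

/-- Static hierarchical information: there is a total order of the players such
that along every history, the information sets respect this order. -/
def StaticHI (G : GameGraph n V A B) : Prop :=
  ∃ ord : Fin n → Fin n → Prop, IsLinearOrder (Fin n) ord ∧
    ∀ i j : Fin n, ord i j → ∀ π, G.IsHistory π → G.InfoSet i π ⊆ G.InfoSet j π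

/-- Hierarchical observation: there is a total order of the players such that
the observation of a smaller player determines that of a bigger player, positionally. -/
def HierObs (G : GameGraph n V A B) : Prop :=
  ∃ ord : Fin n → Fin n → Prop, IsLinearOrder (Fin n) ord ∧
    ∀ i j : Fin n, ord i j → ∀ v v' : V, G.obs i v = G.obs i v' → G.obs j v = G.obs j v'

/-- Dynamic hierarchical information: every history yields hierarchical information. -/
def DynamicHI (G : GameGraph n V A B) : Prop := ∀ π, G.IsHistory π → G.HistHI π

/-- The prefix `v₀ … v_t` of a play, as a list. -/
def playPrefix (f : ℕ → V) (t : ℕ) : List V := (List.range (t + 1)).map f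

/-- A play: an infinite sequence all of whose prefixes are histories. -/
def IsPlay (G : GameGraph n V A B) (f : ℕ → V) : Prop :=
  ∀ t, G.IsHistory (playPrefix f t)

/-- A play yields recurring hierarchical information if infinitely many of its
prefix histories yield hierarchical information. -/
def PlayRecurringHI (G : GameGraph n V A B) (f : ℕ → V) : Prop :=
  ∀ T, ∃ t, T ≤ t ∧ G.HistHI (playPrefix f t)

/-- A game yields recurring hierarchical information if every play does. -/
def RecurringHI (G : GameGraph n V A B) : Prop :=
  ∀ f, G.IsPlay f → G.PlayRecurringHI f

/-- `[t, t+ℓ]` is a gap of the play `f`: no prefix of length `r ∈ [t, t+ℓ]` yields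
hierarchical information.  The length of this gap is `ℓ + 1`. -/
def IsGap (G : GameGraph n V A B) (f : ℕ → V) (t ℓ : ℕ) : Prop :=
  ∀ r, t ≤ r → r ≤ t + ℓ → ¬ G.HistHI (playPrefix f r)

/-- Information-consistency of a strategy profile: each component is constant on
indistinguishability classes of histories. -/
def Consistent (G : GameGraph n V A B) (s : ∀ i, List V → A i) : Prop :=
  ∀ (i : Fin n) (π π' : List V),
    G.IsHistory π → G.IsHistory π' → G.Indist i π π' → s i π = s i π'

/-- A play follows a strategy profile. -/
def Follows (G : GameGraph n V A B) (s : ∀ i, List V → A i) (f : ℕ → V) : Prop :=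
  f 0 = G.init ∧ ∀ t, ∃ a, G.move (f t) a (f (t + 1)) ∧ ∀ i, a i = s i (playPrefix f t)

/-- A distributed winning strategy for winning condition `W`: an information-consistent
profile all of whose outcomes lie in `W`. -/
def WinningProfile (G : GameGraph n V A B) (W : Set (ℕ → V)) (s : ∀ i, List V → A i) : Prop :=
  G.Consistent s ∧ ∀ f, G.Follows s f → f ∈ W

/-- A finite-state strategy for player `i`: implemented by a Moore machine reading
the observation sequence of the history. -/
def FinStateStrategy (G : GameGraph n V A B) (i : Fin n) (si : List V → A i) : Prop :=
  ∃ mc : Moore (B i) (A i), ∀ π, G.IsHistory π → si π = mc.output (G.obsSeq i π)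

/-- The game admits a distributed winning strategy for `W`. -/
def HasDWS (G : GameGraph n V A B) (W : Set (ℕ → V)) : Prop :=
  ∃ s : ∀ i, List V → A i, G.WinningProfile W s

/-- The game admits a finite-state distributed winning strategy for `W`. -/
def HasFinDWS (G : GameGraph n V A B) (W : Set (ℕ → V)) : Prop :=
  ∃ s : ∀ i, List V → A i, G.WinningProfile W s ∧ ∀ i, G.FinStateStrategy i (s i)

/-- `i ⪯_π j` : at history `π`, player `i` is at least as informed as player `j`. -/
def infoLE (G : GameGraph n V A B) (π : List V) (i j : Fin n) : Prop :=
  G.InfoSet i π ⊆ G.InfoSet j π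

/-- The information rank of player `i` at history `π`: the number of players `j`
with `j ≺_π i`, or with `j < i` and `j ≈_π i`. -/
noncomputable def rank (G : GameGraph n V A B) (i : Fin n) (π : List V) : ℕ :=
  Nat.card {j : Fin n //
    (G.infoLE π j i ∧ ¬ G.infoLE π i j) ∨ (j < i ∧ G.infoLE π j i ∧ G.infoLE π i j)}

/-- The signal `λ_j^i`: the set of observations of player `i` at the last positions of
histories in the information set of player `j`. -/
def lam (G : GameGraph n V A B) (i j : Fin n) (π : List V) : Set (B i) :=
  { b | ∃ π', π' ∈ G.InfoSet j π ∧ ∃ v, π'.getLast? = some v ∧ G.obs i v = b }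

/-- Players `i` and `j` cross at stage `ℓ` of the play `f`. -/
def Crossing (G : GameGraph n V A B) (f : ℕ → V) (ℓ : ℕ) (i j : Fin n) : Prop :=
  G.InfoSet i (playPrefix f ℓ) ⊂ G.InfoSet j (playPrefix f ℓ) ∧
  G.InfoSet j (playPrefix f (ℓ + 1)) ⊂ G.InfoSet i (playPrefix f (ℓ + 1))

/-- A game is cross-free if no two players cross at any stage of any play. -/
def CrossFree (G : GameGraph n V A B) : Prop :=
  ∀ f, G.IsPlay f → ∀ (ℓ : ℕ) (i j : Fin n), ¬ G.Crossing f ℓ i j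

end GameGraph

/-!
Each player is additionally shown the current observations of all less informed players;
positions and moves are unchanged (`M = Unit`). Observations are then hierarchical
position by position. This gives no player new information: since a player's information set is
contained in those of the less informed players, his own observation history already determines
theirs. So strategies transfer in both directions by composing with the projection or the lift of
histories. For finite-state strategies, the extra observation is computed from the current belief
(the set of positions consistent with the observations so far), which a finite subset
construction maintains.
-/

namespace Moore

variable {σ σ' γ : Type}

def comap (g : σ' → σ) (mc : Moore σ γ) : Moore σ' γ :=
  { mc with δ := fun q b => mc.δ q (g b) }

theorem output_comap (g : σ' → σ) (mc : Moore σ γ) (w : List σ') :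
    (mc.comap g).output w = mc.output (w.map g) := by
  simp [output, comap, List.foldl_map]

end Moore

namespace GameGraph

variable {n : ℕ} {V : Type} {A B : Fin n → Type} {G : GameGraph n V A B}
  {ord : Fin n → Fin n → Prop} {i : Fin n} {π σ : List V} {v : V}

theorem IsHistory.ne_nil (h : G.IsHistory π) : π ≠ [] := by
  rintro rfl
  simp [IsHistory] at h

theorem isHistory_append_singleton :
    G.IsHistory (π ++ [v]) ↔
      π = [] ∧ v = G.init ∨ G.IsHistory π ∧ ∃ u ∈ π.getLast?, G.step u v := by
  rcases eq_or_ne π [] with rfl | hne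
  · simp [IsHistory, List.Chain']
  · simp [IsHistory, List.Chain', List.isChain_append, List.head?_eq_some_head hne,
      List.getLast?_eq_some_getLast hne, hne, and_assoc]

theorem obsSeq_append_singleton (i : Fin n) (hπ : π ≠ []) (v : V) :
    G.obsSeq i (π ++ [v]) = G.obsSeq i π ++ [G.obs i v] := by
  simp [obsSeq, List.drop_append_of_le_length (List.length_pos_iff.2 hπ)]

theorem getLast?_obsSeq (j : Fin n) (hv : v ∈ π.getLast?) (hπ : G.obsSeq i π ≠ []) :
    (G.obsSeq j π).getLast? = some (G.obs j v) := by
  rw [obsSeq, Ne, List.map_eq_nil_iff, List.drop_eq_nil_iff] at hπ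
  rw [obsSeq, List.getLast?_map, List.getLast?_drop, if_neg hπ, Option.mem_def.1 hv,
    Option.map_some]

variable (G) in
def beliefStep (i : Fin n) (S : Set V) (b : B i) : Set V :=
  {w | ∃ u ∈ S, G.step u w ∧ G.obs i w = b}

variable (G) in
def belief (i : Fin n) (w : List (B i)) : Set V :=
  {v | ∃ π, G.IsHistory π ∧ G.obsSeq i π = w ∧ v ∈ π.getLast?}

theorem belief_nil (i : Fin n) : G.belief i [] = {G.init} := by
  ext v
  constructor
  · rintro ⟨_ | ⟨u, π⟩, ⟨hinit, -⟩, hobs, hv⟩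
    · simp at hinit
    · obtain rfl : π = [] := by simpa [obsSeq] using hobs
      simp_all
  · rintro rfl
    exact ⟨[G.init], ⟨rfl, List.isChain_singleton _⟩, rfl, rfl⟩

theorem belief_append_singleton (i : Fin n) (w : List (B i)) (b : B i) :
    G.belief i (w ++ [b]) = G.beliefStep i (G.belief i w) b := by
  ext x
  constructor
  · rintro ⟨π, hπ, hobs, hx⟩
    obtain ⟨π₀, rfl⟩ := List.getLast?_eq_some_iff.1 hx
    rcases isHistory_append_singleton.1 hπ with ⟨rfl, -⟩ | ⟨hπ₀, u, hu, hux⟩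
    · simp [obsSeq] at hobs
    · rw [obsSeq_append_singleton i hπ₀.ne_nil, List.append_singleton_inj] at hobs
      exact ⟨u, ⟨π₀, hπ₀, hobs.1, hu⟩, hux, hobs.2⟩
  · rintro ⟨u, ⟨π, hπ, rfl, hu⟩, hux, rfl⟩
    exact ⟨π ++ [x], isHistory_append_singleton.2 (.inr ⟨hπ, u, hu, hux⟩),
      obsSeq_append_singleton i hπ.ne_nil x, by simp⟩

variable (G ord) in
def IsInfoHierarchy : Prop :=
  ∀ i j : Fin n, ord i j → ∀ π, G.IsHistory π → G.InfoSet i π ⊆ G.InfoSet j π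

theorem IsInfoHierarchy.obs_eq_of_mem_belief (hord : G.IsInfoHierarchy ord) {k : Fin n} (hik : ord i k) (hπ : G.IsHistory π)
    (hv : v ∈ π.getLast?) (hne : G.obsSeq i π ≠ []) {u : V}
    (hu : u ∈ G.belief i (G.obsSeq i π)) : G.obs k u = G.obs k v := by
  obtain ⟨σ, hσ, hobs, hu⟩ := hu
  have hk : G.obsSeq k π = G.obsSeq k σ := (hord i k hik π hπ ⟨hσ, hobs.symm⟩).2
  have := getLast?_obsSeq k hv hne
  rwa [hk, getLast?_obsSeq k hu (hobs ▸ hne), Option.some_inj] at this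

noncomputable section Expansion

open scoped Classical

variable (G ord) in
def expandObs (i : Fin n) (v : V) : ∀ k : Fin n, Option (B k) :=
  fun k => if ord i k then some (G.obs k v) else none

theorem expandObs_eq_expandObs_iff {u : V} :
    G.expandObs ord i u = G.expandObs ord i v ↔ ∀ k, ord i k → G.obs k u = G.obs k v := by
  simp only [funext_iff, expandObs]
  refine forall_congr' fun k => ?_
  by_cases hik : ord i k <;> simp [hik]

variable (G ord) in
def expand : GameGraph n (V × Unit) A (fun _ => ∀ k : Fin n, Option (B k)) where
  init := (G.init, ())
  move p a q := G.move p.1 a q.1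
  noDeadEnd p a := let ⟨w, hw⟩ := G.noDeadEnd p.1 a; ⟨(w, ()), hw⟩
  obs i p := G.expandObs ord i p.1

theorem expand_hierObs (hlin : IsLinearOrder (Fin n) ord) : (G.expand ord).HierObs := by
  refine ⟨ord, hlin, fun i j hij u v h => ?_⟩
  rw [expand, expandObs_eq_expandObs_iff] at h ⊢
  exact fun k hjk => h k (_root_.trans hij hjk)

def liftHist (π : List V) : List (V × Unit) := π.map (·, ())

@[simp]
theorem map_fst_liftHist (π : List V) : (liftHist π).map Prod.fst = π := by
  simp [liftHist, Function.comp_def]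

theorem liftHist_surjective : Function.Surjective (liftHist (V := V)) :=
  fun π' => ⟨π'.map Prod.fst, by simp [liftHist, Function.comp_def]⟩

@[simp]
theorem expand_isHistory_liftHist : (G.expand ord).IsHistory (liftHist π) ↔ G.IsHistory π := by
  rw [IsHistory, IsHistory, liftHist, List.head?_map, List.Chain', List.Chain', List.isChain_map]
  exact and_congr (by cases π.head? <;> simp [expand]) Iff.rfl

theorem expand_obsSeq_liftHist (i : Fin n) (π : List V) :
    (G.expand ord).obsSeq i (liftHist π) = (π.drop 1).map (G.expandObs ord i) := by
  simp [obsSeq, liftHist, expand, Function.comp_def]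

theorem map_getD_expand_obsSeq (hi : ord i i) (d : B i) (π : List V) :
    ((G.expand ord).obsSeq i (liftHist π)).map (fun b => (b i).getD d) = G.obsSeq i π := by
  rw [expand_obsSeq_liftHist]
  simp [obsSeq, expandObs, hi, Function.comp_def]

theorem indist_of_expand_indist (hi : ord i i)
    (h : (G.expand ord).Indist i (liftHist π) (liftHist σ)) : G.Indist i π σ := by
  have := congrArg (List.map fun b => (b i).getD (G.obs i G.init)) h
  rwa [map_getD_expand_obsSeq hi, map_getD_expand_obsSeq hi] at this

theorem IsInfoHierarchy.expand_indist (hord : G.IsInfoHierarchy ord) (hπ : G.IsHistory π)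
    (hσ : G.IsHistory σ) (h : G.Indist i π σ) :
    (G.expand ord).Indist i (liftHist π) (liftHist σ) := by
  have hk : ∀ k, ord i k → G.obsSeq k π = G.obsSeq k σ := fun k hik =>
    (hord i k hik π hπ ⟨hσ, h⟩).2
  rw [Indist, expand_obsSeq_liftHist, expand_obsSeq_liftHist]
  refine List.ext_getElem (by simpa [obsSeq] using congrArg List.length h) fun m hm hm' => ?_
  simp only [List.getElem_map]
  refine expandObs_eq_expandObs_iff.2 fun k hik => ?_
  simpa [obsSeq] using List.getElem_of_eq (hk k hik) (by simpa [obsSeq] using hm)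

theorem liftHist_playPrefix (f' : ℕ → V × Unit) (t : ℕ) :
    liftHist (playPrefix (fun t => (f' t).1) t) = playPrefix f' t := by
  simp [liftHist, playPrefix, Function.comp_def]

theorem expand_follows_iff (s' : ∀ i, List (V × Unit) → A i) (f' : ℕ → V × Unit) :
    (G.expand ord).Follows s' f' ↔
      G.Follows (fun i π => s' i (liftHist π)) (fun t => (f' t).1) := by
  simp only [Follows, liftHist_playPrefix, Prod.ext_iff, expand, and_true]

theorem WinningProfile.expand {W : Set (ℕ → V)} {s : ∀ i, List V → A i} (hrefl : ∀ i, ord i i)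
    (hs : G.WinningProfile W s) :
    (G.expand ord).WinningProfile {f' | (fun t => (f' t).1) ∈ W}
      (fun i π' => s i (π'.map Prod.fst)) := by
  refine ⟨fun i π' σ' hπ' hσ' h => ?_, fun f' hf' => ?_⟩
  · obtain ⟨π, rfl⟩ := liftHist_surjective π'
    obtain ⟨σ, rfl⟩ := liftHist_surjective σ'
    rw [expand_isHistory_liftHist] at hπ' hσ'
    simpa using hs.1 i π σ hπ' hσ' (indist_of_expand_indist (hrefl i) h)
  · rw [expand_follows_iff] at hf'
    simp only [map_fst_liftHist] at hf'
    exact hs.2 _ hf'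

theorem IsInfoHierarchy.winningProfile_of_expand {W : Set (ℕ → V)}
    {s' : ∀ i, List (V × Unit) → A i} (hord : G.IsInfoHierarchy ord)
    (hs' : (G.expand ord).WinningProfile {f' | (fun t => (f' t).1) ∈ W} s') :
    G.WinningProfile W (fun i π => s' i (liftHist π)) :=
  ⟨fun i _ _ hπ hσ h => hs'.1 i _ _ (expand_isHistory_liftHist.2 hπ)
      (expand_isHistory_liftHist.2 hσ) (hord.expand_indist hπ hσ h),
    fun f hf => hs'.2 (fun t => (f t, ())) ((expand_follows_iff _ _).2 hf)⟩

theorem FinStateStrategy.expand {si : List V → A i} (hi : ord i i)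
    (h : G.FinStateStrategy i si) :
    (G.expand ord).FinStateStrategy i (fun π' => si (π'.map Prod.fst)) := by
  obtain ⟨mc, hmc⟩ := h
  refine ⟨mc.comap fun b => (b i).getD (G.obs i G.init), fun π' hπ' => ?_⟩
  obtain ⟨π, rfl⟩ := liftHist_surjective π'
  rw [expand_isHistory_liftHist] at hπ'
  dsimp only
  rw [Moore.output_comap, map_getD_expand_obsSeq hi, map_fst_liftHist, hmc π hπ']

variable (G ord) in
def beliefLetter (i : Fin n) (S : Set V) : ∀ k : Fin n, Option (B k) :=
  if h : S.Nonempty then G.expandObs ord i h.some else G.expandObs ord i G.init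

theorem IsInfoHierarchy.beliefLetter_belief (hord : G.IsInfoHierarchy ord)
    (hπ : G.IsHistory π) (hv : v ∈ π.getLast?) (hne : G.obsSeq i π ≠ []) :
    G.beliefLetter ord i (G.belief i (G.obsSeq i π)) = G.expandObs ord i v := by
  have hS : (G.belief i (G.obsSeq i π)).Nonempty := ⟨v, π, hπ, rfl, hv⟩
  rw [beliefLetter, dif_pos hS, expandObs_eq_expandObs_iff]
  exact fun k hik => hord.obs_eq_of_mem_belief hik hπ hv hne hS.some_mem

variable (G ord) in
def beliefMoore [Fintype V] (i : Fin n) (mc : Moore (∀ k : Fin n, Option (B k)) (A i)) :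
    Moore (B i) (A i) where
  Q := Set V × mc.Q
  finQ := letI := mc.finQ; inferInstance
  q0 := ({G.init}, mc.q0)
  δ p b := (G.beliefStep i p.1 b, mc.δ p.2 (G.beliefLetter ord i (G.beliefStep i p.1 b)))
  out p := mc.out p.2

theorem IsInfoHierarchy.foldl_beliefMoore [Fintype V] (hord : G.IsInfoHierarchy ord)
    (mc : Moore (∀ k : Fin n, Option (B k)) (A i)) (hπ : G.IsHistory π) :
    (G.obsSeq i π).foldl (G.beliefMoore ord i mc).δ (G.beliefMoore ord i mc).q0 =
      (G.belief i (G.obsSeq i π), ((G.expand ord).obsSeq i (liftHist π)).foldl mc.δ mc.q0) := by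
  induction π using List.reverseRecOn with
  | nil => exact absurd rfl hπ.ne_nil
  | append_singleton π v ih =>
    rcases isHistory_append_singleton.1 hπ with ⟨rfl, rfl⟩ | ⟨hπ₀, -, -, -⟩
    · simp [obsSeq, liftHist, beliefMoore, belief_nil]
    · have hobs := obsSeq_append_singleton (G := G) i hπ₀.ne_nil v
      have hletter := hord.beliefLetter_belief (i := i) (v := v) hπ (by simp) (by simp [hobs])
      rw [hobs] at hletter
      have hlift : liftHist (π ++ [v]) = liftHist π ++ [(v, ())] := by simp [liftHist]
      rw [hobs, hlift, obsSeq_append_singleton i (by simpa [liftHist] using hπ₀.ne_nil),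
        List.foldl_append, List.foldl_append, ih hπ₀]
      simp only [List.foldl_cons, List.foldl_nil, beliefMoore, ← belief_append_singleton, hletter]
      rfl

theorem IsInfoHierarchy.finStateStrategy_of_expand [Fintype V] {si' : List (V × Unit) → A i}
    (hord : G.IsInfoHierarchy ord) (h : (G.expand ord).FinStateStrategy i si') :
    G.FinStateStrategy i (fun π => si' (liftHist π)) := by
  obtain ⟨mc, hmc⟩ := h
  refine ⟨G.beliefMoore ord i mc, fun π hπ => ?_⟩
  dsimp only
  rw [hmc _ (expand_isHistory_liftHist.2 hπ), Moore.output, Moore.output,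
    hord.foldl_beliefMoore mc hπ]
  rfl

end Expansion

end GameGraph

open GameGraph in
theorem statement1_general {n : ℕ} {V : Type} {A B : Fin n → Type}
    [Fintype V] [∀ i, Fintype (B i)]
    (G : GameGraph n V A B) (hG : G.StaticHI) (W : Set (ℕ → V)) :
    ∃ (M : Type) (_ : Fintype M) (B' : Fin n → Type) (_ : ∀ i, Fintype (B' i))
      (G' : GameGraph n (V × M) A B'),
      G'.HierObs ∧
      (G.HasDWS W ↔ G'.HasDWS { f : ℕ → V × M | (fun t => (f t).1) ∈ W }) ∧
      (G.HasFinDWS W ↔ G'.HasFinDWS { f : ℕ → V × M | (fun t => (f t).1) ∈ W }) := by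
  obtain ⟨ord, hlin, hord⟩ : ∃ ord, IsLinearOrder (Fin n) ord ∧ G.IsInfoHierarchy ord := hG
  have hrefl : ∀ i, ord i i := fun i => refl_of ord i
  refine ⟨Unit, inferInstance, _, fun _ => inferInstance, G.expand ord, expand_hierObs hlin,
    ⟨?_, ?_⟩, ⟨?_, ?_⟩⟩
  · exact fun ⟨s, hs⟩ => ⟨_, hs.expand hrefl⟩
  · exact fun ⟨s', hs'⟩ => ⟨_, hord.winningProfile_of_expand hs'⟩
  · exact fun ⟨s, hs, hfin⟩ => ⟨_, hs.expand hrefl, fun i => (hfin i).expand (hrefl i)⟩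
  · exact fun ⟨s', hs', hfin⟩ =>
      ⟨_, hord.winningProfile_of_expand hs', fun i => hord.finStateStrategy_of_expand (hfin i)⟩

/-- Every finite game graph `G` with static hierarchical information can be
expanded into a game graph `G'` over positions `V × M` (`M` finite, same players and action
sets, enlarged observation alphabets) that yields hierarchical observation such that, for the
winning condition `W'` induced on the `V`-components by any winning condition `W`, the
existence of (finite-state) distributed winning strategies is preserved in both directions. -/
theorem statement1 {n : ℕ} {V : Type} {A B : Fin n → Type}
    [Fintype V] [∀ i, Fintype (A i)] [∀ i, Fintype (B i)]
    (G : GameGraph n V A B) (hG : G.StaticHI) (W : Set (ℕ → V)) :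
    ∃ (M : Type) (_ : Fintype M) (B' : Fin n → Type) (_ : ∀ i, Fintype (B' i))
      (G' : GameGraph n (V × M) A B'),
      G'.HierObs ∧
      (G.HasDWS W ↔ G'.HasDWS { f : ℕ → V × M | (fun t => (f t).1) ∈ W }) ∧
      (G.HasFinDWS W ↔ G'.HasFinDWS { f : ℕ → V × M | (fun t => (f t).1) ∈ W }) :=
  statement1_general G hG W
end

section
/- Let G be a finite game graph. For all players i, j, the signal λ_j^i mapping each history π to the set { β^i(v') | v' is the last position of some history π' ∈ P^j(π) } ⊆ B^i is a finite-state signal (implemented by a Moore machine with input alphabet V), and it is information-consistent for player j. -/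
/-!
Player `j`'s knowledge after a history `π` — the set of last positions of histories
indistinguishable from `π` — evolves by a subset construction: after observing the next
position `x`, it becomes the set of successors of its elements that `j` observes like `x`.
Since `V` is finite, a Moore machine can maintain this set, and `λ_j^i(π)` is its image
under `β^i`. Information consistency holds because `P^j(π)` depends only on `β^j(π)`.
-/

namespace GameGraph

variable {n : ℕ} {V : Type} {A B : Fin n → Type} (G : GameGraph n V A B)

lemma isHistory_iff (π : List V) :
    G.IsHistory π ↔ π.head? = some G.init ∧ π.IsChain G.step :=
  Iff.rfl

lemma IsHistory.ne_nil_s9 {G : GameGraph n V A B} {π : List V} (h : G.IsHistory π) : π ≠ [] := by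
  rintro rfl
  simp [isHistory_iff] at h

lemma isHistory_singleton_iff (x : V) : G.IsHistory [x] ↔ x = G.init := by
  simp [isHistory_iff]

lemma isHistory_snoc_iff {π : List V} (hπ : π ≠ []) (x : V) :
    G.IsHistory (π ++ [x]) ↔ G.IsHistory π ∧ G.step (π.getLast hπ) x := by
  simp only [isHistory_iff, List.isChain_append, List.head?_append_of_ne_nil _ hπ,
    List.getLast?_eq_some_getLast hπ]
  simp [and_assoc]

lemma obsSeq_eq_nil_iff (j : Fin n) (π : List V) : G.obsSeq j π = [] ↔ π.length ≤ 1 := by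
  rw [obsSeq, List.map_eq_nil_iff, List.drop_eq_nil_iff]

lemma obsSeq_snoc (j : Fin n) {π : List V} (hπ : π ≠ []) (x : V) :
    G.obsSeq j (π ++ [x]) = G.obsSeq j π ++ [G.obs j x] := by
  obtain ⟨a, l, rfl⟩ := List.exists_cons_of_ne_nil hπ
  simp [obsSeq]

lemma exists_eq_snoc_of_obsSeq_eq_snoc (j : Fin n) {π : List V} {l : List (B j)} {b : B j}
    (h : G.obsSeq j π = l ++ [b]) :
    ∃ ρ w, ρ ≠ [] ∧ π = ρ ++ [w] ∧ G.obsSeq j ρ = l ∧ G.obs j w = b := by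
  rcases π.eq_nil_or_concat with rfl | ⟨ρ, w, rfl⟩
  · simp [obsSeq] at h
  rw [List.concat_eq_append] at h ⊢
  have hρ : ρ ≠ [] := by
    rintro rfl
    simp [obsSeq] at h
  rw [G.obsSeq_snoc j hρ] at h
  obtain ⟨hl, hb⟩ := List.append_inj' h rfl
  exact ⟨ρ, w, hρ, rfl, hl, List.singleton_inj.1 hb⟩

lemma infoSet_congr {j : Fin n} {π π' : List V} (h : G.Indist j π π') :
    G.InfoSet j π = G.InfoSet j π' := by
  simp only [InfoSet, Indist, show G.obsSeq j π = G.obsSeq j π' from h]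

lemma lam_congr (i : Fin n) {j : Fin n} {π π' : List V} (h : G.Indist j π π') :
    G.lam i j π = G.lam i j π' := by
  simp only [lam, G.infoSet_congr h]

def knowledge (j : Fin n) (π : List V) : Set V :=
  {v | ∃ π' ∈ G.InfoSet j π, π'.getLast? = some v}

lemma lam_eq_image_knowledge (i j : Fin n) (π : List V) :
    G.lam i j π = G.obs i '' G.knowledge j π := by
  ext b
  simp only [lam, knowledge, Set.mem_image, Set.mem_ofPred_eq]
  constructor
  · rintro ⟨π', hπ', v, hv, rfl⟩
    exact ⟨v, ⟨π', hπ', hv⟩, rfl⟩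
  · rintro ⟨v, ⟨π', hπ', hv⟩, rfl⟩
    exact ⟨π', hπ', v, hv, rfl⟩

lemma infoSet_singleton (j : Fin n) (x : V) : G.InfoSet j [x] = {[G.init]} := by
  ext π'
  simp only [InfoSet, Indist, Set.mem_ofPred_eq, Set.mem_singleton_iff]
  constructor
  · rintro ⟨hπ', hobs⟩
    have hlen : π'.length ≤ 1 :=
      (G.obsSeq_eq_nil_iff j π').1 (by simpa [obsSeq] using hobs.symm)
    obtain ⟨v, rfl⟩ : ∃ v, π' = [v] := List.length_eq_one_iff.1 (by
      have := List.length_pos_iff.2 hπ'.ne_nil_s9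
      omega)
    rw [(G.isHistory_singleton_iff v).1 hπ']
  · rintro rfl
    exact ⟨(G.isHistory_singleton_iff _).2 rfl, rfl⟩

lemma knowledge_singleton (j : Fin n) (x : V) : G.knowledge j [x] = {G.init} := by
  ext v
  simp [knowledge, infoSet_singleton, eq_comm]

def knowledgeUpdate (j : Fin n) (S : Set V) (x : V) : Set V :=
  {w | (∃ u ∈ S, G.step u w) ∧ G.obs j w = G.obs j x}

lemma knowledge_snoc (j : Fin n) {π : List V} (hπ : π ≠ []) (x : V) :
    G.knowledge j (π ++ [x]) = G.knowledgeUpdate j (G.knowledge j π) x := by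
  ext w
  simp only [knowledge, knowledgeUpdate, InfoSet, Indist, Set.mem_ofPred_eq, G.obsSeq_snoc j hπ]
  constructor
  · rintro ⟨π', ⟨hπ', hobs⟩, hlast⟩
    obtain ⟨ρ, w', hρ, rfl, hρobs, hw'⟩ := G.exists_eq_snoc_of_obsSeq_eq_snoc j hobs.symm
    obtain rfl : w' = w := by simpa using hlast
    obtain ⟨hρhist, hstep⟩ := (G.isHistory_snoc_iff hρ w').1 hπ'
    have hu : ρ.getLast hρ ∈ G.knowledge j π :=
      ⟨ρ, ⟨hρhist, hρobs.symm⟩, List.getLast?_eq_some_getLast hρ⟩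
    exact ⟨⟨ρ.getLast hρ, hu, hstep⟩, hw'⟩
  · rintro ⟨⟨u, ⟨ρ, ⟨hρhist, hρobs⟩, hlast⟩, hstep⟩, hw⟩
    have hρ := hρhist.ne_nil_s9
    obtain rfl : ρ.getLast hρ = u := by simpa [List.getLast?_eq_some_getLast hρ] using hlast
    have hhist : G.IsHistory (ρ ++ [w]) := (G.isHistory_snoc_iff hρ w).2 ⟨hρhist, hstep⟩
    refine ⟨ρ ++ [w], ⟨hhist, ?_⟩, List.getLast?_concat⟩
    rw [G.obsSeq_snoc j hρ, hρobs, hw]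

/-- `none` is the state before the initial position has been read. -/
def knowledgeStep (j : Fin n) : Option (Set V) → V → Option (Set V)
  | none, _ => some {G.init}
  | some S, x => some (G.knowledgeUpdate j S x)

lemma foldl_knowledgeStep (j : Fin n) {π : List V} (hπ : π ≠ []) :
    π.foldl (G.knowledgeStep j) none = some (G.knowledge j π) := by
  induction π using List.reverseRecOn with
  | nil => exact absurd rfl hπ
  | append_singleton ρ x ih =>
    rcases eq_or_ne ρ [] with rfl | hρ
    · simp [knowledgeStep, knowledge_singleton]
    · rw [List.foldl_append, ih hρ, G.knowledge_snoc j hρ]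
      rfl

noncomputable def lamMachine [Fintype V] (i j : Fin n) : Moore V (Set (B i)) where
  Q := Option (Set V)
  finQ := inferInstance
  q0 := none
  δ := G.knowledgeStep j
  out q := q.elim ∅ (G.obs i '' ·)

lemma lamMachine_output [Fintype V] (i j : Fin n) {π : List V} (hπ : π ≠ []) :
    (G.lamMachine i j).output π = G.lam i j π := by
  rw [lam_eq_image_knowledge, Moore.output]
  exact congrArg (Option.elim · ∅ (G.obs i '' ·)) (G.foldl_knowledgeStep j hπ)

end GameGraph

theorem statement9_general {n : ℕ} {V : Type} {A B : Fin n → Type}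
    [Fintype V]
    (G : GameGraph n V A B) (i j : Fin n) :
    (∃ mc : Moore V (Set (B i)), ∀ π, G.IsHistory π → mc.output π = G.lam i j π) ∧
    (∀ π π', G.IsHistory π → G.IsHistory π' → G.Indist j π π' →
      G.lam i j π = G.lam i j π') :=
  ⟨⟨G.lamMachine i j, fun _ hπ => G.lamMachine_output i j hπ.ne_nil_s9⟩,
    fun _ _ _ _ h => G.lam_congr i h⟩

/-- In a finite game graph, for all players `i, j` the signal `λ_j^i`
(mapping a history to the set of last observations of player `i` along histories in the
information set of player `j`) is a finite-state signal (computed by a Moore machine with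
input alphabet `V`) and is information-consistent for player `j`. -/
theorem statement9 {n : ℕ} {V : Type} {A B : Fin n → Type}
    [Fintype V] [∀ i, Fintype (A i)] [∀ i, Fintype (B i)]
    (G : GameGraph n V A B) (i j : Fin n) :
    (∃ mc : Moore V (Set (B i)), ∀ π, G.IsHistory π → mc.output π = G.lam i j π) ∧
    (∀ π π', G.IsHistory π → G.IsHistory π' → G.Indist j π π' →
      G.lam i j π = G.lam i j π') :=
  statement9_general G i j
end
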